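/- For every integer d ≥ 2, the map π_o : SC_d(0,2;o) → S^{d-2} sending ((x,r),(y,s)) to (x − y)/‖x − y‖ is a well-defined continuous map and a homotopy equivalence; moreover π_o(τ(c)) = −π_o(c) for every c ∈ SC_d(0,2;o), where τ swaps the two semiballs. In particular the configuration space SC_d(0,2;o) of two nonoverlapping semiballs in the closed upper unit semiball is homotopy equivalent to the sphere S^{d-2}. -/

import Mathlib

noncomputable section

/-- The configuration space `SC_d(0,2;o)` of two nonoverlapping semiballs in the closed
upper unit semiball of `ℝ^d`. -/
def SC02 (d : ℕ) (hd : 2 ≤ d) :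
    Set ((EuclideanSpace ℝ (Fin d) × ℝ) × (EuclideanSpace ℝ (Fin d) × ℝ)) :=
  {c | 0 < c.1.2 ∧ 0 < c.2.2 ∧
       c.1.1 ⟨d - 1, by omega⟩ = 0 ∧ c.2.1 ⟨d - 1, by omega⟩ = 0 ∧
       ‖c.1.1‖ + c.1.2 ≤ 1 ∧ ‖c.2.1‖ + c.2.2 ≤ 1 ∧
       ‖c.1.1 - c.2.1‖ ≥ c.1.2 + c.2.2}

/-- The sphere `S^{d-2} = {z ∈ S^{d-1} : z_d = 0}` inside `ℝ^d`. -/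
def sphereLast (d : ℕ) (hd : 2 ≤ d) : Set (EuclideanSpace ℝ (Fin d)) :=
  {z | ‖z‖ = 1 ∧ z ⟨d - 1, by omega⟩ = 0}

/-- The raw formula of the projection `π_o`, sending `((x,r),(y,s))` to `(x−y)/‖x−y‖`. -/
def rawPi (d : ℕ) :
    (EuclideanSpace ℝ (Fin d) × ℝ) × (EuclideanSpace ℝ (Fin d) × ℝ) →
      EuclideanSpace ℝ (Fin d) :=
  fun c => ‖c.1.1 - c.2.1‖⁻¹ • (c.1.1 - c.2.1)

/-!
Two nonoverlapping semiballs are pushed, along straight lines, to the standard configuration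
of two semiballs of radius `1/4` centred at `±u/2`, where `u = (x - y)/‖x - y‖` is their
direction. The conditions on each semiball separately cut out a convex set, and along the
segment the difference of the centres stays a positive multiple of `u`, so its norm grows
exactly as fast as needed to keep the semiballs apart.
-/

open ContinuousMap

def ContinuousMap.Homotopy.affineOfSegmentSubset {X E : Type*} [TopologicalSpace X]
    [AddCommGroup E] [TopologicalSpace E] [IsTopologicalAddGroup E] [Module ℝ E]
    [ContinuousSMul ℝ E] {S : Set E} (f g : C(X, S))
    (hS : ∀ x, segment ℝ (f x : E) (g x) ⊆ S) : f.Homotopy g where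
  toFun p := ⟨AffineMap.lineMap (f p.2 : E) (g p.2) (p.1 : ℝ), hS p.2 <|
    segment_eq_image_lineMap ℝ (f p.2 : E) (g p.2) ▸ ⟨p.1, p.1.2, rfl⟩⟩
  continuous_toFun := by
    apply Continuous.subtype_mk
    simp only [AffineMap.lineMap_apply_module]
    fun_prop
  map_zero_left := by simp
  map_one_left := by simp

theorem norm_smul_add_smul_normalize {E : Type*} [NormedAddCommGroup E] [NormedSpace ℝ E]
    {v : E} (hv : v ≠ 0) {t : ℝ} (ht₀ : 0 ≤ t) (ht₁ : t ≤ 1) :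
    ‖(1 - t) • v + t • (‖v‖⁻¹ • v)‖ = (1 - t) * ‖v‖ + t := by
  have hray : SameRay ℝ ((1 - t) • v) ((t * ‖v‖⁻¹) • v) :=
    ((SameRay.refl v).nonneg_smul_left (sub_nonneg.2 ht₁)).nonneg_smul_right (by positivity)
  rw [← smul_smul] at hray
  rw [hray.norm_add, norm_smul, norm_smul, norm_smul, norm_inv, norm_norm,
    inv_mul_cancel₀ (norm_ne_zero_iff.2 hv),
    Real.norm_of_nonneg (sub_nonneg.2 ht₁), Real.norm_of_nonneg ht₀, mul_one]

theorem rawPi_swap {d : ℕ}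
    (c : (EuclideanSpace ℝ (Fin d) × ℝ) × (EuclideanSpace ℝ (Fin d) × ℝ)) :
    rawPi d c.swap = -rawPi d c := by
  rw [rawPi, rawPi, Prod.fst_swap, Prod.snd_swap, ← neg_sub, norm_neg, smul_neg]

namespace SC02

def unitSemiballs (d : ℕ) (hd : 2 ≤ d) : Set (EuclideanSpace ℝ (Fin d) × ℝ) :=
  {p | 0 < p.2 ∧ p.1 ⟨d - 1, by omega⟩ = 0 ∧ ‖p.1‖ + p.2 ≤ 1}

variable {d : ℕ} {hd : 2 ≤ d}

theorem mem_iff {c : (EuclideanSpace ℝ (Fin d) × ℝ) × (EuclideanSpace ℝ (Fin d) × ℝ)} :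
    c ∈ SC02 d hd ↔
      c.1 ∈ unitSemiballs d hd ∧ c.2 ∈ unitSemiballs d hd ∧
        c.1.2 + c.2.2 ≤ ‖c.1.1 - c.2.1‖ := by
  simp only [SC02, unitSemiballs, Set.mem_ofPred_eq, ge_iff_le]
  tauto

theorem convex_unitSemiballs : Convex ℝ (unitSemiballs d hd) := by
  rintro ⟨x, r⟩ ⟨hr, hx, hxr⟩ ⟨y, s⟩ ⟨hs, hy, hys⟩ a b ha hb hab
  dsimp only at hr hx hxr hs hy hys
  refine ⟨?_, ?_, ?_⟩
  · simp only [Prod.snd_add, Prod.smul_snd, smul_eq_mul]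
    rcases ha.eq_or_lt with rfl | ha
    · rw [zero_add] at hab
      simpa [hab] using hs
    · nlinarith [mul_pos ha hr, mul_nonneg hb hs.le]
  · simp [hx, hy]
  · calc ‖a • x + b • y‖ + (a * r + b * s)
          ≤ a * (‖x‖ + r) + b * (‖y‖ + s) := by
            have := norm_add_le (a • x) (b • y)
            rw [norm_smul_of_nonneg ha, norm_smul_of_nonneg hb] at this
            linarith
        _ ≤ a * 1 + b * 1 := by gcongr
        _ = 1 := by rw [mul_one, mul_one, hab]

theorem sub_ne_zero_of_mem
    {c : (EuclideanSpace ℝ (Fin d) × ℝ) × (EuclideanSpace ℝ (Fin d) × ℝ)}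
    (hc : c ∈ SC02 d hd) : c.1.1 - c.2.1 ≠ 0 := by
  obtain ⟨hr, hs, -, -, -, -, hsep⟩ := hc
  rw [← norm_pos_iff]
  linarith

theorem rawPi_mem_sphereLast
    {c : (EuclideanSpace ℝ (Fin d) × ℝ) × (EuclideanSpace ℝ (Fin d) × ℝ)}
    (hc : c ∈ SC02 d hd) : rawPi d c ∈ sphereLast d hd := by
  refine ⟨norm_smul_inv_norm (sub_ne_zero_of_mem hc), ?_⟩
  simp [rawPi, hc.2.2.1, hc.2.2.2.1]

theorem swap_mem {c : (EuclideanSpace ℝ (Fin d) × ℝ) × (EuclideanSpace ℝ (Fin d) × ℝ)}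
    (hc : c ∈ SC02 d hd) : c.swap ∈ SC02 d hd := by
  obtain ⟨h₁, h₂, hsep⟩ := mem_iff.1 hc
  refine mem_iff.2 ⟨h₂, h₁, ?_⟩
  rw [Prod.fst_swap, Prod.snd_swap, norm_sub_rev, add_comm]
  exact hsep

theorem continuous_rawPi : Continuous (fun c : SC02 d hd => rawPi d c.1) := by
  have hsub : Continuous (fun c : SC02 d hd => c.1.1.1 - c.1.2.1) := by fun_prop
  exact (hsub.norm.inv₀ fun c => norm_ne_zero_iff.2 (sub_ne_zero_of_mem c.2)).smul hsub

def standardConfig (z : EuclideanSpace ℝ (Fin d)) :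
    (EuclideanSpace ℝ (Fin d) × ℝ) × (EuclideanSpace ℝ (Fin d) × ℝ) :=
  (((1 / 2 : ℝ) • z, 1 / 4), (-((1 / 2 : ℝ) • z), 1 / 4))

theorem standardConfig_fst_sub_snd (z : EuclideanSpace ℝ (Fin d)) :
    (standardConfig z).1.1 - (standardConfig z).2.1 = z := by
  simp only [standardConfig]
  module

theorem standardConfig_mem {z : EuclideanSpace ℝ (Fin d)} (hz : z ∈ sphereLast d hd) :
    standardConfig z ∈ SC02 d hd := by
  obtain ⟨hz₁, hz₂⟩ := hz
  have hhalf : ‖(1 / 2 : ℝ) • z‖ = 1 / 2 := by rw [norm_smul, hz₁]; norm_num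
  refine mem_iff.2 ⟨⟨by norm_num [standardConfig], by simp [standardConfig, hz₂], ?_⟩,
    ⟨by norm_num [standardConfig], by simp [standardConfig, hz₂], ?_⟩, ?_⟩
  · simp only [standardConfig, hhalf]; norm_num
  · simp only [standardConfig, norm_neg, hhalf]; norm_num
  · rw [standardConfig_fst_sub_snd, hz₁]; norm_num [standardConfig]

theorem rawPi_standardConfig {z : EuclideanSpace ℝ (Fin d)} (hz : ‖z‖ = 1) :
    rawPi d (standardConfig z) = z := by
  rw [rawPi, standardConfig_fst_sub_snd, hz, inv_one, one_smul]

theorem segment_standardConfig_subset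
    {c : (EuclideanSpace ℝ (Fin d) × ℝ) × (EuclideanSpace ℝ (Fin d) × ℝ)}
    (hc : c ∈ SC02 d hd) : segment ℝ c (standardConfig (rawPi d c)) ⊆ SC02 d hd := by
  obtain ⟨hc₁, hc₂, hsep⟩ := mem_iff.1 hc
  obtain ⟨hσ₁, hσ₂, -⟩ := mem_iff.1 (standardConfig_mem (rawPi_mem_sphereLast hc))
  rw [segment_eq_image]
  rintro _ ⟨t, ⟨ht₀, ht₁⟩, rfl⟩
  refine mem_iff.2
    ⟨convex_unitSemiballs hc₁ hσ₁ (sub_nonneg.2 ht₁) ht₀ (sub_add_cancel 1 t),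
      convex_unitSemiballs hc₂ hσ₂ (sub_nonneg.2 ht₁) ht₀ (sub_add_cancel 1 t), ?_⟩
  have hdiff : ((1 - t) • c + t • standardConfig (rawPi d c)).1.1 -
      ((1 - t) • c + t • standardConfig (rawPi d c)).2.1 =
      (1 - t) • (c.1.1 - c.2.1) + t • rawPi d c := by
    simp only [standardConfig, Prod.fst_add, Prod.snd_add, Prod.smul_fst, Prod.smul_snd]
    module
  rw [hdiff, rawPi, norm_smul_add_smul_normalize (sub_ne_zero_of_mem hc) ht₀ ht₁]
  simp only [standardConfig, Prod.fst_add, Prod.snd_add, Prod.smul_fst, Prod.smul_snd,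
    smul_eq_mul]
  linarith [mul_le_mul_of_nonneg_left hsep (sub_nonneg.2 ht₁)]

def proj (d : ℕ) (hd : 2 ≤ d) : C(SC02 d hd, sphereLast d hd) :=
  ⟨fun c => ⟨rawPi d c, rawPi_mem_sphereLast c.2⟩, continuous_rawPi.subtype_mk _⟩

def ofSphere (d : ℕ) (hd : 2 ≤ d) : C(sphereLast d hd, SC02 d hd) :=
  ⟨fun z => ⟨standardConfig z, standardConfig_mem z.2⟩,
    (by unfold standardConfig; fun_prop : Continuous (standardConfig (d := d))).comp
      continuous_subtype_val |>.subtype_mk _⟩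

theorem proj_comp_ofSphere : (proj d hd).comp (ofSphere d hd) = ContinuousMap.id _ := by
  ext z : 2
  exact rawPi_standardConfig z.2.1

def homotopyEquivSphere (d : ℕ) (hd : 2 ≤ d) : HomotopyEquiv (SC02 d hd) (sphereLast d hd) where
  toFun := proj d hd
  invFun := ofSphere d hd
  left_inv := ⟨(Homotopy.affineOfSegmentSubset (.id _) ((ofSphere d hd).comp (proj d hd))
    fun c => segment_standardConfig_subset c.2).symm⟩
  right_inv := by rw [proj_comp_ofSphere]

end SC02

/-- For every integer `d ≥ 2`, the map
`π_o : SC_d(0,2;o) → S^{d-2}`, `((x,r),(y,s)) ↦ (x−y)/‖x−y‖`, is well defined and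
continuous, it is a homotopy equivalence, and `π_o(τ(c)) = −π_o(c)` where `τ` swaps the
two semiballs.  In particular `SC_d(0,2;o)` is homotopy equivalent to `S^{d-2}`. -/
theorem swissCheese_two_semiballs_homotopy_equiv_sphere (d : ℕ) (hd : 2 ≤ d) :
    (∀ c ∈ SC02 d hd, rawPi d c ∈ sphereLast d hd) ∧
    Continuous (fun c : SC02 d hd => rawPi d c.1) ∧
    (∃ h : ContinuousMap.HomotopyEquiv (SC02 d hd) (sphereLast d hd),
        ∀ c : SC02 d hd, (h.toFun c : EuclideanSpace ℝ (Fin d)) = rawPi d c.1) ∧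
    (∀ c ∈ SC02 d hd, Prod.swap c ∈ SC02 d hd ∧ rawPi d (Prod.swap c) = - rawPi d c) :=
  ⟨fun _ => SC02.rawPi_mem_sphereLast, SC02.continuous_rawPi,
    ⟨SC02.homotopyEquivSphere d hd, fun _ => rfl⟩,
    fun c hc => ⟨SC02.swap_mem hc, rawPi_swap c⟩⟩
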